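/- Let D₀, D₁, D₂ be symmetric positive definite n×n matrices of the form D_j = ∑_{t=1}^m w_t f_t^j x_t x_tᵀ with weights w_t > 0, scalars f_t > 0, and vectors x_t ∈ ℝⁿ. Then D₁⁻¹ D₀ D₁⁻¹ ⪰ D₂⁻¹ in the Löwner order. -/

import Mathlib

open Finset Matrix

lemma aux1 {n : ℕ} (v : Fin n → ℝ) : (Matrix.vecMulVec v v).PosSemidef := by
  rw [Matrix.posSemidef_iff_dotProduct_mulVec]
  constructor
  · ext i j
    simp [Matrix.vecMulVec_apply, mul_comm]
  · intro y
    have : star y ⬝ᵥ (Matrix.vecMulVec v v *ᵥ y) = (v ⬝ᵥ y) * (v ⬝ᵥ y) := by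
      simp [dotProduct, Matrix.mulVec, Matrix.vecMulVec_apply, Finset.mul_sum,
        Finset.sum_mul]
      rw [Finset.sum_comm]
      congr 1; ext i; congr 1; ext j; ring
    rw [this]
    exact mul_self_nonneg _

lemma aux2 {n : ℕ} (c : ℝ) (hc : 0 ≤ c) {M : Matrix (Fin n) (Fin n) ℝ}
    (hM : M.PosSemidef) : (c • M).PosSemidef := by
  rw [Matrix.posSemidef_iff_dotProduct_mulVec]
  constructor
  · show (c • M)ᴴ = c • M
    rw [Matrix.conjTranspose_smul, hM.1.eq, star_trivial]
  · intro y
    rw [Matrix.smul_mulVec, dotProduct_smul]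
    exact mul_nonneg hc (hM.dotProduct_mulVec_nonneg y)

lemma aux3 {n : ℕ} (M N : Matrix (Fin n) (Fin n) ℝ) (v : Fin n → ℝ) :
    Matrix.vecMulVec (M *ᵥ v) (N *ᵥ v) = M * Matrix.vecMulVec v v * Nᵀ := by
  ext i j
  simp [Matrix.vecMulVec_apply, Matrix.mulVec, Matrix.mul_apply, dotProduct,
    Finset.sum_mul, Finset.mul_sum]
  congr 1; ext k; congr 1; ext l; ring


lemma auxsum {n m : ℕ} (g : Fin m → Matrix (Fin n) (Fin n) ℝ)
    (h : ∀ t, (g t).PosSemidef) : (∑ t, g t).PosSemidef := by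
  rw [Matrix.posSemidef_iff_dotProduct_mulVec]
  constructor
  · show (∑ t, g t)ᴴ = ∑ t, g t
    rw [Matrix.conjTranspose_sum]
    exact Finset.sum_congr rfl fun t _ => (h t).1
  · intro y
    have hmv : (∑ t, g t) *ᵥ y = ∑ t, g t *ᵥ y := by
      ext i
      simp [Matrix.mulVec, dotProduct, Matrix.sum_apply, Finset.sum_mul,
        Finset.sum_comm (γ := Fin m)]
    have hdp : star y ⬝ᵥ (∑ t, g t *ᵥ y) = ∑ t, star y ⬝ᵥ (g t *ᵥ y) := by
      simp [dotProduct, Finset.mul_sum]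
      rw [Finset.sum_comm]
    rw [hmv, hdp]
    exact Finset.sum_nonneg fun t _ => (h t).dotProduct_mulVec_nonneg y

theorem weighted_sandwich_loewner (n m : ℕ)
    (w f : Fin m → ℝ) (hw : ∀ t, 0 < w t) (hf : ∀ t, 0 < f t)
    (x : Fin m → Fin n → ℝ)
    (D : ℕ → Matrix (Fin n) (Fin n) ℝ)
    (hD : ∀ j, D j = ∑ t, (w t * f t ^ j) • Matrix.vecMulVec (x t) (x t))
    (hpos : ∀ j ∈ ({0, 1, 2} : Finset ℕ), (D j).PosDef) :
    ((D 1)⁻¹ * D 0 * (D 1)⁻¹ - (D 2)⁻¹).PosSemidef := by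
  have h0 := hpos 0 (by simp)
  have h1 := hpos 1 (by simp)
  have h2 := hpos 2 (by simp)
  set X : Fin m → Matrix (Fin n) (Fin n) ℝ := fun t => Matrix.vecMulVec (x t) (x t) with hX
  set A : Matrix (Fin n) (Fin n) ℝ := (D 1)⁻¹ with hA
  set B : Matrix (Fin n) (Fin n) ℝ := (D 2)⁻¹ with hB
  have hAt : Aᵀ = A := by
    have h := h1.isHermitian.inv
    simpa [Matrix.IsHermitian, Matrix.conjTranspose_eq_transpose_of_trivial] using h
  have hBt : Bᵀ = B := by
    have h := h2.isHermitian.inv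
    simpa [Matrix.IsHermitian, Matrix.conjTranspose_eq_transpose_of_trivial] using h
  have hd1 : IsUnit (D 1).det := isUnit_iff_ne_zero.mpr h1.det_pos.ne'
  have hd2 : IsUnit (D 2).det := isUnit_iff_ne_zero.mpr h2.det_pos.ne'
  have hAD : A * D 1 = 1 := Matrix.nonsing_inv_mul _ hd1
  have hDA : D 1 * A = 1 := Matrix.mul_nonsing_inv _ hd1
  have hBD : B * D 2 = 1 := Matrix.nonsing_inv_mul _ hd2
  have pull : ∀ (P Q : Matrix (Fin n) (Fin n) ℝ) (j : ℕ),
      ∑ t, (w t * f t ^ j) • (P * X t * Q) = P * D j * Q := by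
    intro P Q j
    rw [hD j, Matrix.mul_sum, Matrix.sum_mul]
    exact Finset.sum_congr rfl fun t _ => by
      rw [Matrix.mul_smul, Matrix.smul_mul]
  have key : A * D 0 * A - B
      = ∑ t, (A - f t • B) * (w t • X t) * (A - f t • B)ᵀ := by
    have expand : ∀ t, (A - f t • B) * (w t • X t) * (A - f t • B)ᵀ
        = (w t * f t ^ 0) • (A * X t * A) - (w t * f t ^ 1) • (A * X t * B)
          - (w t * f t ^ 1) • (B * X t * A) + (w t * f t ^ 2) • (B * X t * B) := by
      intro t
      rw [Matrix.transpose_sub, Matrix.transpose_smul, hAt, hBt]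
      simp only [Matrix.sub_mul, Matrix.mul_sub, Matrix.smul_mul, Matrix.mul_smul,
        smul_smul, pow_zero, pow_one, pow_two]
      module
    rw [Finset.sum_congr rfl (fun t _ => expand t)]
    simp only [Finset.sum_add_distrib, Finset.sum_sub_distrib, pull]
    rw [hAD, hBD, Matrix.mul_assoc B (D 1) A, hDA, Matrix.mul_one]
    simp only [Matrix.one_mul]
    abel
  rw [key]
  apply auxsum
  intro t
  have hps := aux2 (w t) (hw t).le (aux1 (x t))
  have := hps.mul_mul_conjTranspose_same (A - f t • B)
  rwa [Matrix.conjTranspose_eq_transpose_of_trivial] at this
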